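/- For every integer x ≥ 1, the three explicit sums S₁(x) = Σ_{j=0}^{x−1} ((2j−1)!!·x!·(2x−1)!!·(2x−2j)·(2x−1)!)/((4x−1)!!·j!·(x−j)!·(2x−2j−1)!!·(2j)!), S₂(x) = Σ_{j=0}^{x−1} ((2j−1)!!·(x−1)!·(2x−1)!!·(2x−2j−1)·(2x−2)!)/((4x−3)!!·j!·(x−j−1)!·(2x−2j−1)!!·(2j)!), and S₃(x) = Σ_{j=0}^{x−1} ((2j+1)!!·(x−1)!·(2x−3)!!·(2x−2j−2)·(2x−1)!)/((4x−3)!!·j!·(x−j−1)!·(2x−2j−3)!!·(2j+2)!) satisfy (4x−1)·S₁(x) − (2x−1)·(S₂(x) + S₃(x)) = 1, as an identity in ℚ. -/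

import Mathlib

/-!
With `(n, k) = (2x - 1, 0), (2x - 2, 0), (2x - 2, 1)` for `S₁, S₂, S₃`, each summand is a constant
times `C(n, j) * C(n - j, j + k) * 2 ^ (n - 2j - k)`, the part of the coefficient of `X ^ (n + k)`
in `(1 + X * (X + 2)) ^ n = (1 + X) ^ (2n)` where `1` is chosen from exactly `j` factors. Summing
over `j` gives `C(2n, n + k)`, and the constant is `2 / centralBinom (n + 1)`, so the ratio of
consecutive central binomial coefficients yields `S₁ x = 2x / (4x - 1)`,
`S₂ x = (2x - 1) / (4x - 3)` and `S₃ x = (2x - 2) / (4x - 3)`.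
-/

/-- Double factorial `n‼`; with natural subtraction as argument this also
implements the convention `(-1)‼ = 0‼ = 1`. -/
def dfact : ℕ → ℕ
  | 0 => 1
  | 1 => 1
  | n + 2 => (n + 2) * dfact n

open Nat

/-- The closed-form value of `P (2x) (2x)`. -/
noncomputable def S₁ (x : ℕ) : ℚ :=
  ∑ j ∈ Finset.range x,
    ((dfact (2 * j - 1) : ℚ) * (x ! : ℚ) * (dfact (2 * x - 1) : ℚ) *
        ((2 * x - 2 * j : ℕ) : ℚ) * ((2 * x - 1) ! : ℚ)) /
      ((dfact (4 * x - 1) : ℚ) * (j ! : ℚ) * ((x - j) ! : ℚ) *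
        (dfact (2 * x - 2 * j - 1) : ℚ) * ((2 * j) ! : ℚ))

/-- The closed-form value of `P (2x-1) (2x-1)`. -/
noncomputable def S₂ (x : ℕ) : ℚ :=
  ∑ j ∈ Finset.range x,
    ((dfact (2 * j - 1) : ℚ) * ((x - 1) ! : ℚ) * (dfact (2 * x - 1) : ℚ) *
        ((2 * x - 2 * j - 1 : ℕ) : ℚ) * ((2 * x - 2) ! : ℚ)) /
      ((dfact (4 * x - 3) : ℚ) * (j ! : ℚ) * ((x - j - 1) ! : ℚ) *
        (dfact (2 * x - 2 * j - 1) : ℚ) * ((2 * j) ! : ℚ))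

/-- The closed-form value of `P (2x-2) (2x)`. -/
noncomputable def S₃ (x : ℕ) : ℚ :=
  ∑ j ∈ Finset.range x,
    ((dfact (2 * j + 1) : ℚ) * ((x - 1) ! : ℚ) * (dfact (2 * x - 3) : ℚ) *
        ((2 * x - 2 * j - 2 : ℕ) : ℚ) * ((2 * x - 1) ! : ℚ)) /
      ((dfact (4 * x - 3) : ℚ) * (j ! : ℚ) * ((x - j - 1) ! : ℚ) *
        (dfact (2 * x - 2 * j - 3) : ℚ) * ((2 * j + 2) ! : ℚ))

open Finset Polynomial

theorem dfact_eq_doubleFactorial : ∀ n, dfact n = n‼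
  | 0 | 1 => rfl
  | n + 2 => by rw [dfact, doubleFactorial_add_two, dfact_eq_doubleFactorial n]

theorem cast_dfact_two_mul_add_one (m : ℕ) :
    (dfact (2 * m + 1) : ℚ) = (2 * m + 1)! / (2 ^ m * m !) := by
  have h := factorial_eq_mul_doubleFactorial (2 * m)
  rw [doubleFactorial_two_mul, ← dfact_eq_doubleFactorial] at h
  rw [eq_div_iff (by positivity)]
  exact_mod_cast h.symm

theorem cast_dfact_two_mul_sub_one (m : ℕ) :
    (dfact (2 * m - 1) : ℚ) = (2 * m)! / (2 ^ m * m !) := by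
  cases m with
  | zero => simp [dfact]
  | succ m =>
    have h := factorial_eq_mul_doubleFactorial (2 * m + 1)
    rw [show 2 * m + 1 + 1 = 2 * (m + 1) by ring, doubleFactorial_two_mul,
      ← dfact_eq_doubleFactorial] at h
    rw [show 2 * (m + 1) - 1 = 2 * m + 1 by omega, eq_div_iff (by positivity), h]
    push_cast
    ring

theorem sum_choose_mul_choose_mul_two_pow (n k : ℕ) :
    ∑ j ∈ range (n + 1), n.choose j * (n - j).choose (j + k) * 2 ^ (n - 2 * j - k) =
      (2 * n).choose (n + k) := by
  have hsquare : (1 + X : ℕ[X]) ^ 2 = 1 + X * (X + C 2) := by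
    rw [show (C 2 : ℕ[X]) = 2 from rfl]; ring
  have hexpand := congrArg (coeff · (n + k)) (add_pow (1 : ℕ[X]) (X * (X + C 2)) n)
  simp only [← hsquare, ← pow_mul, coeff_one_add_X_pow, finsetSum_coeff, Nat.cast_id] at hexpand
  rw [hexpand]
  refine sum_congr rfl fun j hj => ?_
  have hjn : j ≤ n := by simp at hj; omega
  rw [one_pow, one_mul, mul_pow, ← C_eq_natCast, coeff_mul_C, coeff_X_pow_mul',
    if_pos (by omega), coeff_X_add_C_pow, show n + k - (n - j) = j + k by omega,
    show n - j - (j + k) = n - 2 * j - k by omega]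
  simp only [Nat.cast_id]
  ring

theorem sum_range_choose_mul_choose_mul_two_pow {n k N : ℕ} (hN : n < 2 * N + k) :
    ∑ j ∈ range N, n.choose j * (n - j).choose (j + k) * 2 ^ (n - 2 * j - k) =
      (2 * n).choose (n + k) := by
  have hvanish : ∀ j, n < 2 * j + k →
      n.choose j * (n - j).choose (j + k) * 2 ^ (n - 2 * j - k) = 0 := fun j hj => by
    rw [Nat.choose_eq_zero_of_lt (by omega : n - j < j + k)]; simp
  rw [← sum_choose_mul_choose_mul_two_pow n k,
    sum_subset (range_subset_range.2 (by omega : N ≤ N + n + 1))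
      fun j hj hjN => hvanish j (by simp at hj hjN; omega),
    sum_subset (range_subset_range.2 (by omega : n + 1 ≤ N + n + 1))
      fun j hj hjn => hvanish j (by simp at hj hjn; omega)]

theorem two_mul_centralBinom_div_centralBinom_succ (n : ℕ) :
    2 * (centralBinom n : ℚ) / centralBinom (n + 1) = (n + 1) / (2 * n + 1) := by
  have h : ((n + 1) * centralBinom (n + 1) : ℚ) = 2 * (2 * n + 1) * centralBinom n := by
    exact_mod_cast succ_mul_centralBinom_succ n
  have : (centralBinom (n + 1) : ℚ) ≠ 0 := by exact_mod_cast centralBinom_ne_zero _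
  rw [div_eq_div_iff this (by positivity)]
  linear_combination -h

theorem two_mul_choose_succ_div_centralBinom_succ (n : ℕ) :
    2 * ((2 * n).choose (n + 1) : ℚ) / centralBinom (n + 1) = n / (2 * n + 1) := by
  have h : ((2 * n).choose (n + 1) * (n + 1) : ℚ) = centralBinom n * n := by
    rw [centralBinom_eq_two_mul_choose]
    exact_mod_cast (choose_succ_right_eq (2 * n) n).trans (by rw [show 2 * n - n = n by omega])
  rw [eq_div_of_mul_eq (by positivity) h]
  calc _ = 2 * (centralBinom n : ℚ) / centralBinom (n + 1) * (n / (n + 1)) := by ring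
    _ = _ := by rw [two_mul_centralBinom_div_centralBinom_succ]; field_simp

theorem S₁_summand_eq {x j : ℕ} (hj : j < x) :
    ((dfact (2 * j - 1) : ℚ) * (x ! : ℚ) * (dfact (2 * x - 1) : ℚ) *
        ((2 * x - 2 * j : ℕ) : ℚ) * ((2 * x - 1) ! : ℚ)) /
      ((dfact (4 * x - 1) : ℚ) * (j ! : ℚ) * ((x - j) ! : ℚ) *
        (dfact (2 * x - 2 * j - 1) : ℚ) * ((2 * j) ! : ℚ)) =
      (2 * x)! / (2 ^ (2 * x - 1) * dfact (4 * x - 1)) *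
        ((2 * x - 1).choose j * (2 * x - 1 - j).choose j * 2 ^ (2 * x - 1 - 2 * j) : ℕ) := by
  obtain ⟨d, rfl⟩ := Nat.exists_eq_add_of_lt hj
  rw [show 2 * (j + d + 1) - 2 * j - 1 = 2 * d + 1 by omega,
    show 2 * (j + d + 1) - 1 - 2 * j = 2 * d + 1 by omega,
    show 2 * (j + d + 1) - 1 - j = j + 2 * d + 1 by omega,
    show 2 * (j + d + 1) - 2 * j = 2 * d + 2 by omega,
    show 2 * (j + d + 1) - 1 = 2 * (j + d) + 1 by omega,
    show j + d + 1 - j = d + 1 by omega,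
    cast_dfact_two_mul_sub_one, cast_dfact_two_mul_add_one, cast_dfact_two_mul_add_one,
    Nat.cast_mul, Nat.cast_mul, Nat.cast_choose ℚ (show j ≤ 2 * (j + d) + 1 by omega),
    Nat.cast_choose ℚ (show j ≤ j + 2 * d + 1 by omega),
    show 2 * (j + d) + 1 - j = j + 2 * d + 1 by omega, show j + 2 * d + 1 - j = 2 * d + 1 by omega,
    show 2 * (j + d + 1) = 2 * (j + d) + 1 + 1 by ring,
    factorial_succ (2 * (j + d) + 1), factorial_succ (j + d), factorial_succ d]
  have : (dfact (4 * (j + d + 1) - 1) : ℚ) ≠ 0 := by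
    rw [dfact_eq_doubleFactorial]; positivity
  push_cast
  field_simp
  ring

theorem S₂_summand_eq {x j : ℕ} (hj : j < x) :
    ((dfact (2 * j - 1) : ℚ) * ((x - 1) ! : ℚ) * (dfact (2 * x - 1) : ℚ) *
        ((2 * x - 2 * j - 1 : ℕ) : ℚ) * ((2 * x - 2) ! : ℚ)) /
      ((dfact (4 * x - 3) : ℚ) * (j ! : ℚ) * ((x - j - 1) ! : ℚ) *
        (dfact (2 * x - 2 * j - 1) : ℚ) * ((2 * j) ! : ℚ)) =
      (2 * x - 1)! / (2 ^ (2 * x - 2) * dfact (4 * x - 3)) *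
        ((2 * x - 2).choose j * (2 * x - 2 - j).choose j * 2 ^ (2 * x - 2 - 2 * j) : ℕ) := by
  obtain ⟨d, rfl⟩ := Nat.exists_eq_add_of_lt hj
  rw [show 2 * (j + d + 1) - 2 - j = j + 2 * d by omega,
    show 2 * (j + d + 1) - 2 - 2 * j = 2 * d by omega,
    show 2 * (j + d + 1) - 2 * j - 1 = 2 * d + 1 by omega,
    show 2 * (j + d + 1) - 2 = 2 * (j + d) by omega,
    show 2 * (j + d + 1) - 1 = 2 * (j + d) + 1 by omega,
    show j + d + 1 - 1 = j + d by omega, show j + d + 1 - j - 1 = d by omega,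
    cast_dfact_two_mul_sub_one, cast_dfact_two_mul_add_one, cast_dfact_two_mul_add_one,
    Nat.cast_mul, Nat.cast_mul, Nat.cast_choose ℚ (show j ≤ 2 * (j + d) by omega),
    Nat.cast_choose ℚ (show j ≤ j + 2 * d by omega),
    show 2 * (j + d) - j = j + 2 * d by omega, show j + 2 * d - j = 2 * d by omega,
    factorial_succ (2 * (j + d)), factorial_succ (2 * d)]
  have : (dfact (4 * (j + d + 1) - 3) : ℚ) ≠ 0 := by
    rw [dfact_eq_doubleFactorial]; positivity
  push_cast
  field_simp
  ring

theorem S₃_summand_eq {x j : ℕ} (hj : j < x) :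
    ((dfact (2 * j + 1) : ℚ) * ((x - 1) ! : ℚ) * (dfact (2 * x - 3) : ℚ) *
        ((2 * x - 2 * j - 2 : ℕ) : ℚ) * ((2 * x - 1) ! : ℚ)) /
      ((dfact (4 * x - 3) : ℚ) * (j ! : ℚ) * ((x - j - 1) ! : ℚ) *
        (dfact (2 * x - 2 * j - 3) : ℚ) * ((2 * j + 2) ! : ℚ)) =
      (2 * x - 1)! / (2 ^ (2 * x - 2) * dfact (4 * x - 3)) *
        ((2 * x - 2).choose j * (2 * x - 2 - j).choose (j + 1) *
          2 ^ (2 * x - 2 - 2 * j - 1) : ℕ) := by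
  obtain ⟨d, rfl⟩ := Nat.exists_eq_add_of_lt hj
  rcases d with _ | e
  · rw [show 2 * (j + 0 + 1) - 2 * j - 2 = 0 by omega, show 2 * (j + 0 + 1) - 2 - j = j by omega,
      Nat.choose_eq_zero_of_lt (Nat.lt_succ_self j)]
    simp
  rw [show 2 * (j + (e + 1) + 1) - 2 - j = j + 2 * e + 2 by omega,
    show 2 * (j + (e + 1) + 1) - 2 - 2 * j - 1 = 2 * e + 1 by omega,
    show 2 * (j + (e + 1) + 1) - 2 * j - 2 = 2 * e + 2 by omega,
    show 2 * (j + (e + 1) + 1) - 2 * j - 3 = 2 * e + 1 by omega,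
    show 2 * (j + (e + 1) + 1) - 3 = 2 * (j + e) + 1 by omega,
    show 2 * (j + (e + 1) + 1) - 2 = 2 * (j + e) + 1 + 1 by omega,
    show 2 * (j + (e + 1) + 1) - 1 = 2 * (j + e + 1) + 1 by omega,
    show j + (e + 1) + 1 - 1 = j + e + 1 by omega, show j + (e + 1) + 1 - j - 1 = e + 1 by omega,
    cast_dfact_two_mul_add_one, cast_dfact_two_mul_add_one, cast_dfact_two_mul_add_one,
    Nat.cast_mul, Nat.cast_mul, Nat.cast_choose ℚ (show j ≤ 2 * (j + e) + 1 + 1 by omega),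
    Nat.cast_choose ℚ (show j + 1 ≤ j + 2 * e + 2 by omega),
    show 2 * (j + e) + 1 + 1 - j = j + 2 * e + 2 by omega,
    show j + 2 * e + 2 - (j + 1) = 2 * e + 1 by omega,
    factorial_succ (2 * (j + e) + 1), factorial_succ (j + e), factorial_succ e,
    factorial_succ (2 * j + 1), factorial_succ (j + 2 * e + 1), factorial_succ j]
  have : (dfact (4 * (j + (e + 1) + 1) - 3) : ℚ) ≠ 0 := by
    rw [dfact_eq_doubleFactorial]; positivity
  push_cast
  field_simp
  ring

theorem factorial_succ_div_dfact (n : ℕ) :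
    ((n + 1)! : ℚ) / (2 ^ n * dfact (2 * n + 1)) = 2 / centralBinom (n + 1) := by
  rw [cast_dfact_two_mul_add_one, centralBinom_eq_two_mul_choose, Nat.cast_choose ℚ (by omega),
    show 2 * (n + 1) - (n + 1) = n + 1 by omega, show 2 * (n + 1) = 2 * n + 1 + 1 by ring,
    factorial_succ (2 * n + 1), factorial_succ n]
  push_cast
  field_simp
  ring

theorem S₁_eq {x : ℕ} (hx : 1 ≤ x) : S₁ x = 2 * x / (4 * x - 1) := by
  have hsum :=
    sum_range_choose_mul_choose_mul_two_pow (n := 2 * x - 1) (k := 0) (N := x) (by omega)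
  simp only [add_zero, Nat.sub_zero] at hsum
  rw [S₁, sum_congr rfl fun j hj => S₁_summand_eq (mem_range.1 hj), ← mul_sum,
    ← Nat.cast_sum, hsum, ← centralBinom_eq_two_mul_choose]
  obtain ⟨n, rfl⟩ : ∃ n, x = n + 1 := ⟨x - 1, by omega⟩
  rw [show 2 * (n + 1) - 1 = 2 * n + 1 by omega,
    show 4 * (n + 1) - 1 = 2 * (2 * n + 1) + 1 by omega, show 2 * (n + 1) = 2 * n + 1 + 1 by ring,
    factorial_succ_div_dfact, div_mul_eq_mul_div, two_mul_centralBinom_div_centralBinom_succ]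
  push_cast
  ring

theorem S₂_eq {x : ℕ} (hx : 1 ≤ x) : S₂ x = (2 * x - 1) / (4 * x - 3) := by
  have hsum :=
    sum_range_choose_mul_choose_mul_two_pow (n := 2 * x - 2) (k := 0) (N := x) (by omega)
  simp only [add_zero, Nat.sub_zero] at hsum
  rw [S₂, sum_congr rfl fun j hj => S₂_summand_eq (mem_range.1 hj), ← mul_sum,
    ← Nat.cast_sum, hsum, ← centralBinom_eq_two_mul_choose]
  obtain ⟨n, rfl⟩ : ∃ n, x = n + 1 := ⟨x - 1, by omega⟩
  rw [show 2 * (n + 1) - 2 = 2 * n by omega, show 4 * (n + 1) - 3 = 2 * (2 * n) + 1 by omega,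
    show 2 * (n + 1) - 1 = 2 * n + 1 by omega, factorial_succ_div_dfact, div_mul_eq_mul_div,
    two_mul_centralBinom_div_centralBinom_succ]
  push_cast
  ring

theorem S₃_eq {x : ℕ} (hx : 1 ≤ x) : S₃ x = (2 * x - 2) / (4 * x - 3) := by
  have hsum :=
    sum_range_choose_mul_choose_mul_two_pow (n := 2 * x - 2) (k := 1) (N := x) (by omega)
  rw [S₃, sum_congr rfl fun j hj => S₃_summand_eq (mem_range.1 hj), ← mul_sum,
    ← Nat.cast_sum, hsum]
  obtain ⟨n, rfl⟩ : ∃ n, x = n + 1 := ⟨x - 1, by omega⟩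
  rw [show 2 * (n + 1) - 2 = 2 * n by omega, show 4 * (n + 1) - 3 = 2 * (2 * n) + 1 by omega,
    show 2 * (n + 1) - 1 = 2 * n + 1 by omega, factorial_succ_div_dfact, div_mul_eq_mul_div,
    two_mul_choose_succ_div_centralBinom_succ]
  push_cast
  ring

/-- The closed-form values satisfy the recursion
`P(2x,2x) = 1/(4x-1) + ((2x-1)/(4x-1))·P(2x-1,2x-1) + ((2x-1)/(4x-1))·P(2x-2,2x)`. -/
theorem stmt_5 (x : ℕ) (hx : 1 ≤ x) :
    (4 * (x : ℚ) - 1) * S₁ x - (2 * (x : ℚ) - 1) * (S₂ x + S₃ x) = 1 := by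
  have hx' : (1 : ℚ) ≤ x := by exact_mod_cast hx
  rw [S₁_eq hx, S₂_eq hx, S₃_eq hx]
  field_simp [show (4 * x - 1 : ℚ) ≠ 0 by linarith, show (4 * x - 3 : ℚ) ≠ 0 by linarith]
  ring
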